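/- arXiv:2507.17988 — 3 statements merged into one kernel-verified Lean document; each statement's English description precedes it below -/
import Mathlib

section
/- Let n be a natural number and let A and B be two finite families of subsets of {1,…,n} such that every member of A and every member of B has cardinality exactly ⌊n/2⌋, and A ≠ B. Then there exists a subset μ of {1,…,n} such that exactly one of the following two conditions holds: (i) every member of A has nonempty intersection with μ; (ii) every member of B has nonempty intersection with μ. -/
/-! Take `S` in one family but not the other and `μ = Sᶜ`. Then `S` misses `μ`, while a member
of the other family missing `μ` would lie inside `S` and, having the same size, equal it. -/

open Finset

variable {α : Type*} [Fintype α] [DecidableEq α]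

theorem Finset.inter_compl_nonempty_of_ne_of_card_le {S T : Finset α} (hTS : T ≠ S)
    (hcard : #S ≤ #T) : (T ∩ Sᶜ).Nonempty := by
  rw [← sdiff_eq_inter_compl, sdiff_nonempty]
  exact fun hsub => hTS (eq_of_subset_of_card_le hsub hcard)

theorem xor_forall_inter_compl_nonempty {A B : Finset (Finset α)} {S : Finset α}
    (hSA : S ∈ A) (hSB : S ∉ B) (hB : ∀ T ∈ B, #S ≤ #T) :
    Xor' (∀ T ∈ A, (T ∩ Sᶜ).Nonempty) (∀ T ∈ B, (T ∩ Sᶜ).Nonempty) := by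
  refine Or.inr ⟨fun T hT => inter_compl_nonempty_of_ne_of_card_le ?_ (hB T hT), ?_⟩
  · rintro rfl
    exact hSB hT
  · intro hA
    simpa using hA S hSA

/-- Let `A` and `B` be two finite families of subsets of `Fin n` all of whose
members have cardinality exactly `⌊n/2⌋`, with `A ≠ B`.  Then there is a
subset `μ` of `Fin n` such that exactly one of the following holds:
every member of `A` meets `μ`; every member of `B` meets `μ`. -/
theorem exists_separating_set_of_ne_families (n : ℕ)
    (A B : Finset (Finset (Fin n)))
    (hA : ∀ S ∈ A, S.card = n / 2)
    (hB : ∀ S ∈ B, S.card = n / 2)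
    (hAB : A ≠ B) :
    ∃ μ : Finset (Fin n),
      Xor' (∀ S ∈ A, (S ∩ μ).Nonempty) (∀ S ∈ B, (S ∩ μ).Nonempty) := by
  obtain ⟨S, hS⟩ : ∃ S, ¬(S ∈ A ↔ S ∈ B) := by simpa [Finset.ext_iff] using hAB
  rcases (by tauto : S ∈ A ∧ S ∉ B ∨ S ∈ B ∧ S ∉ A) with ⟨hSA, hSB⟩ | ⟨hSB, hSA⟩
  · exact ⟨Sᶜ, xor_forall_inter_compl_nonempty hSA hSB
      fun T hT => ((hA S hSA).trans (hB T hT).symm).le⟩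
  · exact ⟨Sᶜ, (xor_comm _ _).mp <| xor_forall_inter_compl_nonempty hSB hSA
      fun T hT => ((hB S hSB).trans (hA T hT).symm).le⟩
end

section
/- For every natural number n with n ≥ 4, every deterministic finite automaton over the alphabet of all subsets of {1,…,n} whose accepted language equals L_n has strictly more than 2^n states; here L_n is the set of all nonempty words μ₁μ₂…μ_k μ (with k ≥ 0) over this alphabet such that μ_i ∩ μ ≠ ∅ for every i ∈ {1,…,k}. -/
/-!
By Myhill–Nerode, a DFA has at least as many states as its language has distinct left quotients.
For `Ln n` the words `[]` and `[S]`, one for each of the `2 ^ n` letters `S`, already have pairwise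
distinct left quotients: `[]` lies in the quotient of every `[S]` but not in that of `[]`, and
`[{x}]` lies in the quotient of `[S]` exactly when `x ∈ S`.
-/

/-- `Ln n` is the language of all nonempty words `μ₁ μ₂ … μ_k μ` (with `k ≥ 0`)
over the alphabet of all subsets of `Fin n` such that every letter other than
the last one has nonempty intersection with the last letter. -/
def Ln (n : ℕ) : Language (Finset (Fin n)) :=
  { w | ∃ (ws : List (Finset (Fin n))) (μ : Finset (Fin n)),
      w = ws ++ [μ] ∧ ∀ μi ∈ ws, (μi ∩ μ).Nonempty }

theorem DFA.card_le_of_injective_leftQuotient {α σ ι : Type*} [Fintype σ] [Fintype ι]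
    (M : DFA α σ) (w : ι → List α) (hw : Function.Injective (M.accepts.leftQuotient ∘ w)) :
    Fintype.card ι ≤ Fintype.card σ := by
  rw [Language.leftQuotient_accepts, Function.comp_assoc] at hw
  exact Fintype.card_le_of_injective _ hw.of_comp

namespace Ln

variable {n : ℕ}

theorem nil_not_mem : [] ∉ Ln n := by
  rintro ⟨ws, μ, h, -⟩
  simpa using congrArg List.length h

theorem append_singleton_mem_iff (ws : List (Finset (Fin n))) (μ : Finset (Fin n)) :
    ws ++ [μ] ∈ Ln n ↔ ∀ ν ∈ ws, (ν ∩ μ).Nonempty := by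
  constructor
  · rintro ⟨ws', μ', h, hws'⟩
    obtain ⟨rfl, hμ⟩ := List.append_inj' h rfl
    cases List.singleton_injective hμ
    exact hws'
  · exact fun h => ⟨ws, μ, rfl, h⟩

theorem singleton_mem (S : Finset (Fin n)) : [S] ∈ Ln n :=
  (append_singleton_mem_iff [] S).2 (by simp)

theorem singleton_mem_leftQuotient_singleton_iff (S : Finset (Fin n)) (x : Fin n) :
    [{x}] ∈ (Ln n).leftQuotient [S] ↔ x ∈ S := by
  rw [Language.mem_leftQuotient, List.singleton_append, ← List.singleton_append,
    append_singleton_mem_iff]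
  simp [Finset.Nonempty]

theorem injective_leftQuotient_toList :
    Function.Injective fun o : Option (Finset (Fin n)) => (Ln n).leftQuotient o.toList := by
  have nil_mem_iff (w : List (Finset (Fin n))) : [] ∈ (Ln n).leftQuotient w ↔ w ∈ Ln n := by
    rw [Language.mem_leftQuotient, List.append_nil]
  rintro (_ | S) (_ | T) h <;> simp only [Option.toList_none, Option.toList_some] at h
  · rfl
  · exact (nil_not_mem ((nil_mem_iff []).1 (h ▸ (nil_mem_iff [T]).2 (singleton_mem T)))).elim
  · exact (nil_not_mem ((nil_mem_iff []).1 (h ▸ (nil_mem_iff [S]).2 (singleton_mem S)))).elim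
  · congr 1
    ext x
    rw [← singleton_mem_leftQuotient_singleton_iff, ← singleton_mem_leftQuotient_singleton_iff,
      h]

end Ln

theorem dfa_for_Ln_has_more_than_two_pow_states_general
    {σ : Type*} [Fintype σ] (n : ℕ)
    (M : DFA (Finset (Fin n)) σ) (hM : M.accepts = Ln n) :
    Fintype.card σ > 2 ^ n := by
  have h :=
    M.card_le_of_injective_leftQuotient Option.toList (hM ▸ Ln.injective_leftQuotient_toList)
  simp only [Fintype.card_option, Fintype.card_finset, Fintype.card_fin] at h
  omega

/-- For every `n ≥ 4`, every DFA over the alphabet of all subsets of `Fin n`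
whose accepted language equals `Ln n` has strictly more than `2^n` states. -/
theorem dfa_for_Ln_has_more_than_two_pow_states
    {σ : Type*} [Fintype σ] (n : ℕ) (hn : 4 ≤ n)
    (M : DFA (Finset (Fin n)) σ) (hM : M.accepts = Ln n) :
    Fintype.card σ > 2 ^ n :=
  dfa_for_Ln_has_more_than_two_pow_states_general n M hM
end

section
/- For every natural number n with n ≥ 1, every deterministic finite automaton over the alphabet of all subsets of {1,…,n} whose accepted language equals L_n has at least 2^{C(n,⌊n/2⌋)} states, where C(n,⌊n/2⌋) is the binomial coefficient; here L_n is the set of all nonempty words μ₁μ₂…μ_k μ (with k ≥ 0) over this alphabet such that μ_i ∩ μ ≠ ∅ for every i ∈ {1,…,k}. -/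
theorem DFA.card_le_card_of_injOn_leftQuotient {α σ ι : Type*} [Fintype σ] (M : DFA α σ)
    (s : Finset ι) (f : ι → List α) (hf : Set.InjOn (M.accepts.leftQuotient ∘ f) s) :
    s.card ≤ Fintype.card σ := by
  rw [Language.leftQuotient_accepts] at hf
  exact Finset.card_le_card_of_injOn (M.eval ∘ f) (fun _ _ => Finset.mem_coe.2 (Finset.mem_univ _))
    (Set.InjOn.of_comp (g := M.acceptsFrom) hf)

theorem append_singleton_mem_Ln_iff {n : ℕ} (ws : List (Finset (Fin n))) (μ : Finset (Fin n)) :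
    ws ++ [μ] ∈ Ln n ↔ ∀ ν ∈ ws, (ν ∩ μ).Nonempty := by
  refine ⟨?_, fun h => ⟨ws, μ, rfl, h⟩⟩
  rintro ⟨ws', μ', hw, hall⟩
  obtain ⟨rfl, rfl⟩ := List.append_inj' hw rfl |>.imp id (List.singleton_inj.1)
  exact hall

theorem append_compl_mem_Ln_iff {n : ℕ} {A : Set (Finset (Fin n))}
    (hA : IsAntichain (· ⊆ ·) A) {ws : List (Finset (Fin n))} (hws : ∀ μ ∈ ws, μ ∈ A)
    {ν : Finset (Fin n)} (hν : ν ∈ A) :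
    ws ++ [νᶜ] ∈ Ln n ↔ ν ∉ ws := by
  simp only [append_singleton_mem_Ln_iff, ← Finset.sdiff_eq_inter_compl, Finset.sdiff_nonempty]
  refine ⟨fun h hνws => h ν hνws subset_rfl, fun h μ hμ hμν => h ?_⟩
  rwa [← hA.eq (hws μ hμ) hν hμν]

theorem injOn_leftQuotient_Ln_toList {n : ℕ} {A : Finset (Finset (Fin n))}
    (hA : IsAntichain (· ⊆ ·) (A : Set (Finset (Fin n)))) :
    Set.InjOn ((Ln n).leftQuotient ∘ Finset.toList) A.powerset := by
  intro S hS T hT hST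
  rw [Finset.coe_powerset, Set.mem_preimage, Set.mem_powerset_iff, Finset.coe_subset] at hS hT
  ext ν
  by_cases hν : ν ∈ A
  · have hsuffix := congrArg (fun L : Language _ => [νᶜ] ∈ L) hST
    refine not_iff_not.1 ?_
    simpa [append_compl_mem_Ln_iff hA (fun μ hμ => hS (Finset.mem_toList.1 hμ)) hν,
      append_compl_mem_Ln_iff hA (fun μ hμ => hT (Finset.mem_toList.1 hμ)) hν] using hsuffix
  · exact iff_of_false (fun h => hν (hS h)) (fun h => hν (hT h))

theorem dfa_for_Ln_has_at_least_two_pow_central_binom_states_general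
    {σ : Type*} [Fintype σ] (n : ℕ)
    (M : DFA (Finset (Fin n)) σ) (hM : M.accepts = Ln n) :
    2 ^ Nat.choose n (n / 2) ≤ Fintype.card σ := by
  set A := Finset.powersetCard (n / 2) (Finset.univ : Finset (Fin n))
  have hA : IsAntichain (· ⊆ ·) (A : Set (Finset (Fin n))) :=
    (Set.sized_powersetCard _ _).isAntichain
  have hcard := M.card_le_card_of_injOn_leftQuotient A.powerset Finset.toList
    (hM ▸ injOn_leftQuotient_Ln_toList hA)
  rwa [Finset.card_powerset, Finset.card_powersetCard, Finset.card_univ, Fintype.card_fin]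
    at hcard

/-- For every `n ≥ 1`, every DFA over the alphabet of all subsets of `Fin n`
whose accepted language equals `Ln n` has at least `2^(C(n, ⌊n/2⌋))` states. -/
theorem dfa_for_Ln_has_at_least_two_pow_central_binom_states
    {σ : Type*} [Fintype σ] (n : ℕ) (hn : 1 ≤ n)
    (M : DFA (Finset (Fin n)) σ) (hM : M.accepts = Ln n) :
    2 ^ Nat.choose n (n / 2) ≤ Fintype.card σ :=
  dfa_for_Ln_has_at_least_two_pow_central_binom_states_general n M hM
end
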